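/- arXiv:2003.04834 — 2 statements merged into one kernel-verified Lean document; each statement's English description precedes it below -/
import Mathlib

section
/- The tensor f_com is concise: for every j ∈ Fin d, the flattening matrix M_{f_com}^j has full row rank w j · w (j+1). -/
open scoped BigOperators

attribute [local instance] Classical.propDecidable

namespace ABP

variable {d : ℕ} [NeZero d]

/-- The set of edges in layer `i` of a (cyclic / trace) ABP of width format `w`:
an edge `(a, b)` goes from vertex `a` of layer `i` to vertex `b` of layer `i + 1`
(layer indices modulo `d`). -/
abbrev Edge (w : Fin d → ℕ) (i : Fin d) : Type := Fin (w i) × Fin (w (i + 1))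

/-- An edge tuple is a valid path if consecutive edges match (cyclically). -/
def ValidPath (w : Fin d → ℕ) (p : ∀ i : Fin d, Edge w i) : Prop :=
  ∀ i : Fin d, (p i).2 = (p (i + 1)).1

/-- An edge is parity preserving if its two endpoints have the same parity. -/
def ParityPres {w : Fin d → ℕ} {i : Fin d} (e : Edge w i) : Prop :=
  e.1.val % 2 = e.2.val % 2

/-- The number of parity-preserving edges of an edge tuple. -/
noncomputable def ppCount (w : Fin d → ℕ) (p : ∀ i : Fin d, Edge w i) : ℕ :=
  (Finset.univ.filter fun i : Fin d => ParityPres (p i)).card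

/-- The tensor `f_com`: value 1 on valid paths, 0 elsewhere. -/
noncomputable def fcom (w : Fin d → ℕ) : (∀ i : Fin d, Edge w i) → ℂ :=
  fun p => if ValidPath w p then 1 else 0

/-- The tensor `f_0`: value 1 on valid paths containing exactly one
parity-preserving edge, 0 elsewhere. -/
noncomputable def f0 (w : Fin d → ℕ) : (∀ i : Fin d, Edge w i) → ℂ :=
  fun p => if ValidPath w p ∧ ppCount w p = 1 then 1 else 0

/-- The action of a tuple of matrices `g i : E^i → E^i → ℂ` on a tensor:
`((⊗ᵢ gᵢ) f)(p) = Σ_q (Πᵢ gᵢ (p i) (q i)) · f q`. -/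
noncomputable def actT (w : Fin d → ℕ) (g : ∀ i : Fin d, Edge w i → Edge w i → ℂ)
    (f : (∀ i : Fin d, Edge w i) → ℂ) : (∀ i : Fin d, Edge w i) → ℂ :=
  fun p => ∑ q : ∀ i : Fin d, Edge w i, (∏ i : Fin d, g i (p i) (q i)) * f q

end ABP

namespace ABP

/-- Insert an edge `e` of layer `j` into a tuple of edges of all other layers,
producing a full edge tuple. -/
def insertAt {d : ℕ} [NeZero d] (w : Fin d → ℕ) (j : Fin d) (e : Edge w j)
    (c : ∀ i : {i : Fin d // i ≠ j}, Edge w i.val) : ∀ i : Fin d, Edge w i :=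
  fun i => if h : i = j then cast (congrArg (Edge w) h.symm) e else c ⟨i, h⟩

/-- The `j`-th flattening matrix of a tensor: rows indexed by edges of layer `j`,
columns indexed by tuples of edges of the other layers. -/
def flatten {d : ℕ} [NeZero d] (w : Fin d → ℕ)
    (f : (∀ i : Fin d, Edge w i) → ℂ) (j : Fin d) :
    Matrix (Edge w j) (∀ i : {i : Fin d // i ≠ j}, Edge w i.val) ℂ :=
  Matrix.of fun e c => f (insertAt w j e c)

/-- A tensor is concise if every flattening matrix has full row rank. -/
def Concise {d : ℕ} [NeZero d] (w : Fin d → ℕ)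
    (f : (∀ i : Fin d, Edge w i) → ℂ) : Prop :=
  ∀ j : Fin d, (flatten w f j).rank = w j * w (j + 1)

end ABP

/-! The column of a flattening indexed by the closed walk through a vertex assignment `x` is
the indicator of the single edge `(x j, x (j + 1))`: in a valid path the neighbouring edges of
layers `j - 1` and `j + 1` pin down both endpoints of the edge of layer `j` (this needs `d ≥ 2`).
Running `x` through every edge of layer `j` yields an identity submatrix of the flattening. -/

theorem Fin.add_one_ne_self_of_two_le {d : ℕ} [NeZero d] (hd : 2 ≤ d) (j : Fin d) : j + 1 ≠ j := by
  simp only [ne_eq, add_eq_left, Fin.one_eq_zero_iff]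
  omega

theorem Matrix.rank_eq_card_height_of_submatrix_eq_one {m n K : Type*} [Fintype m] [Fintype n]
    [DecidableEq m] [Field K] (M : Matrix m n K) (c : m → n) (h : M.submatrix id c = 1) :
    M.rank = Fintype.card m :=
  le_antisymm M.rank_le_card_height <| by
    simpa only [h, Matrix.rank_one] using M.rank_submatrix_le id c

namespace ABP

variable {d : ℕ} [NeZero d] {w : Fin d → ℕ}

variable (w) in
def pathOf (x : ∀ i, Fin (w i)) : ∀ i, Edge w i := fun i => (x i, x (i + 1))

lemma validPath_pathOf (x : ∀ i, Fin (w i)) : ValidPath w (pathOf w x) := fun _ => rfl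

lemma ValidPath.val_snd_eq {p : ∀ i, Edge w i} (hp : ValidPath w p) {k i : Fin d}
    (h : k + 1 = i) : ((p k).2 : ℕ) = (p i).1 := by
  subst h
  exact congrArg Fin.val (hp k)

lemma insertAt_self (j : Fin d) (p : ∀ i, Edge w i) :
    insertAt w j (p j) (fun i => p i) = p := by
  funext i
  by_cases hi : i = j
  · subst hi
    simp only [insertAt, ↓reduceDIte, cast_eq]
  · simp only [insertAt, hi, ↓reduceDIte]

lemma validPath_insertAt_pathOf_iff (hd : 2 ≤ d) (x : ∀ i, Fin (w i)) (j : Fin d)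
    (e : Edge w j) : ValidPath w (insertAt w j e fun i => pathOf w x i) ↔ e = pathOf w x j := by
  have hnext := Fin.add_one_ne_self_of_two_le hd j
  have hprev : j - 1 ≠ j := fun h =>
    Fin.add_one_ne_self_of_two_le hd (j - 1) (by rw [sub_add_cancel, h])
  refine ⟨fun hv => ?_, ?_⟩
  · have h1 := hv.val_snd_eq (sub_add_cancel j 1)
    have h2 := hv j
    simp only [insertAt, hprev, hnext, ↓reduceDIte, pathOf, cast_eq] at h1 h2
    rw [sub_add_cancel] at h1
    exact Prod.ext (Fin.ext h1.symm) h2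
  · rintro rfl
    rw [insertAt_self]
    exact validPath_pathOf x

lemma flatten_fcom_apply_pathOf (hd : 2 ≤ d) (j : Fin d) (e : Edge w j) (x : ∀ i, Fin (w i)) :
    flatten w (fcom w) j e (fun i => pathOf w x i) = if e = pathOf w x j then 1 else 0 := by
  simp only [flatten, fcom, Matrix.of_apply, validPath_insertAt_pathOf_iff hd]

lemma pathOf_update_update (hd : 2 ≤ d) (x : ∀ i, Fin (w i)) (j : Fin d) (e : Edge w j) :
    pathOf w (Function.update (Function.update x j e.1) (j + 1) e.2) j = e := by
  simp only [pathOf, Function.update_of_ne (Fin.add_one_ne_self_of_two_le hd j).symm,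
    Function.update_self]

end ABP

theorem fcom_concise_general (d : ℕ) [NeZero d] (hd3 : 3 ≤ d)
    (w : Fin d → ℕ) (hw : ∀ i, 2 ≤ w i) :
    ABP.Concise w (ABP.fcom w) := by
  intro j
  have hd : 2 ≤ d := by omega
  let x₀ : ∀ i, Fin (w i) := fun i => ⟨0, by have := hw i; omega⟩
  let c (e : ABP.Edge w j) : ∀ i : {i : Fin d // i ≠ j}, ABP.Edge w i :=
    fun i => ABP.pathOf w (Function.update (Function.update x₀ j e.1) (j + 1) e.2) i
  have hc : (ABP.flatten w (ABP.fcom w) j).submatrix id c = 1 := by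
    ext e e'
    simp only [Matrix.submatrix_apply, id_eq, c, ABP.flatten_fcom_apply_pathOf hd,
      ABP.pathOf_update_update hd, Matrix.one_apply]
  rw [Matrix.rank_eq_card_height_of_submatrix_eq_one _ c hc, Fintype.card_prod,
    Fintype.card_fin, Fintype.card_fin]

/-- For odd `d ≥ 3` and width format `w` with all `w i ≥ 2`,
the tensor `f_com` is concise: every flattening has full row rank `w j * w (j+1)`. -/
theorem fcom_concise (d : ℕ) [NeZero d] (hd3 : 3 ≤ d) (hodd : Odd d)
    (w : Fin d → ℕ) (hw : ∀ i, 2 ≤ w i) :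
    ABP.Concise w (ABP.fcom w) :=
  fcom_concise_general d hd3 w hw
end

section
/- Let f be either f_com or f_0. The tensors A^{(i)}_{e,e'} f, ranging over all i ∈ Fin d and all pairs of edges e = (a,b), e' = (a',b') ∈ E^i with a ≠ a' and b ≠ b' (i.e. e and e' share no vertex), are linearly independent; consequently the dimension of their ℂ-linear span equals Σ_{i ∈ Fin d} w i · w (i+1) · (w i − 1) · (w (i+1) − 1). -/
open scoped BigOperators

attribute [local instance] Classical.propDecidable

namespace ABP

/-- The action on the `i`-th tensor factor of the elementary matrix with a single 1
in position `(e, e')`: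
`(A^{(i)}_{e,e'} f)(p) = f(p with i-th entry replaced by e)` if `p i = e'`, else `0`. -/
noncomputable def Aact {d : ℕ} [NeZero d] (w : Fin d → ℕ) (i : Fin d) (e e' : Edge w i)
    (f : (∀ i : Fin d, Edge w i) → ℂ) : (∀ i : Fin d, Edge w i) → ℂ :=
  fun p => if p i = e' then f (Function.update p i e) else 0

end ABP

namespace ABP

/-- Index type: a layer `i` together with a pair of edges of layer `i`
sharing no vertex. -/
def NoShare {d : ℕ} [NeZero d] (w : Fin d → ℕ) : Type :=
  Σ i : Fin d, {ee : Edge w i × Edge w i // ee.1.1 ≠ ee.2.1 ∧ ee.1.2 ≠ ee.2.2}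

end ABP

/-!
For every index `x = (i, e, e')` we exhibit a point `pₓ` with `A_y f (pₓ) = δ_{xy}` for all
indices `y`; this gives linear independence, and the dimension is then the number of indices.

Let `q` be the valid path through `e = (a, b)` whose vertices after `b` alternate in parity. As `d`
is odd, the vertex at layer `i - 1` has the parity opposite to `b`, so exactly one of the edges at
layers `i - 1` and `i` preserves parity, and `f q = 1` in both cases. Put `pₓ := q[i ↦ e']`, so that
`A_x f (pₓ) = f q = 1`. If `A_y f (pₓ) ≠ 0` for `y = (j, g, g')`, then `pₓ[j ↦ g]` is a valid path.
For `j ≠ i` it carries `e'` at layer `i` and agrees with `q` at one of the layers `i ± 1` (they are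
distinct as `d ≥ 3`), so `e'` shares a vertex with `e`. Hence `j = i`, and validity forces `g = e`.
-/

open Function

namespace Fin

variable {d : ℕ} [NeZero d]

theorem one_ne_zero_of_one_lt (hd : 1 < d) : (1 : Fin d) ≠ 0 :=
  Fin.ne_of_val_ne (by simp [Nat.mod_eq_of_lt hd])

theorem add_one_ne_self (hd : 1 < d) (i : Fin d) : i + 1 ≠ i :=
  add_ne_left.mpr (one_ne_zero_of_one_lt hd)

theorem sub_one_ne_self (hd : 1 < d) (i : Fin d) : i - 1 ≠ i :=
  mt sub_eq_self.mp (one_ne_zero_of_one_lt hd)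

theorem add_one_ne_sub_one (hd : 2 < d) (i : Fin d) : i + 1 ≠ i - 1 := by
  intro h
  have h2 : i + (1 + 1) = i := by rw [← add_assoc, h, sub_add_cancel]
  simpa [Fin.val_add, Nat.mod_eq_of_lt (by omega : 1 < d), Nat.mod_eq_of_lt hd]
    using congrArg Fin.val (add_eq_left.mp h2)

theorem val_add_one_sub (hd : 1 < d) (i j : Fin d) :
    (j + 1 - i).val = ((j - i).val + 1) % d := by
  rw [add_sub_right_comm, Fin.val_add, Fin.val_one', Nat.mod_eq_of_lt hd]

theorem val_sub_add_one_of_add_one_eq (hd : 1 < d) {i j : Fin d} (h : j + 1 = i) :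
    (j - i).val + 1 = d := by
  have h0 := val_add_one_sub hd i j
  rw [h, sub_self, Fin.val_zero] at h0
  have := (j - i).isLt
  by_contra hne
  rw [Nat.mod_eq_of_lt (by omega)] at h0
  omega

theorem val_add_one_sub_of_add_one_ne (hd : 1 < d) {i j : Fin d} (h : j + 1 ≠ i) :
    (j + 1 - i).val = (j - i).val + 1 := by
  rw [val_add_one_sub hd, Nat.mod_eq_of_lt]
  refine lt_of_le_of_ne (j - i).isLt fun heq => h ?_
  rw [← sub_eq_zero, Fin.ext_iff, val_add_one_sub hd, heq, Nat.mod_self, Fin.val_zero]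

end Fin

theorem linearIndependent_of_apply_eq_ite {ι α K : Type*} [Semiring K] [DecidableEq ι]
    (v : ι → α → K) (p : ι → α) (h : ∀ x y, v y (p x) = if x = y then 1 else 0) :
    LinearIndependent K v := by
  let evalAt : (α → K) →ₗ[K] ι → K := LinearMap.pi fun x => LinearMap.proj (p x)
  refine LinearIndependent.of_comp evalAt ?_
  have hv : evalAt ∘ v = fun y => Pi.single y (1 : K) := by
    ext y x
    exact (h x y).trans (Pi.single_apply y 1 x).symm
  rw [hv]
  exact Pi.linearIndependent_single_one ι K

theorem Fintype.card_subtype_fst_ne_snd (α : Type*) [Fintype α] [DecidableEq α] :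
    card {p : α × α // p.1 ≠ p.2} = card α * (card α - 1) := by
  rw [card_subtype, Nat.mul_sub_one, ← Finset.card_univ, ← Finset.offDiag_card]
  congr 1
  ext
  simp

namespace ABP

variable {d : ℕ} [NeZero d] {w : Fin d → ℕ}

theorem ValidPath.fst_eq_of_eq_pred {q r : ∀ i, Edge w i} (hq : ValidPath w q)
    (hr : ValidPath w r) {i : Fin d} (h : r (i - 1) = q (i - 1)) : (r i).1 = (q i).1 := by
  obtain ⟨k, rfl⟩ : ∃ k, i = k + 1 := ⟨i - 1, (sub_add_cancel i 1).symm⟩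
  rw [add_sub_cancel_right] at h
  rw [← hq k, ← hr k, h]

theorem ValidPath.snd_eq_of_eq_succ {q r : ∀ i, Edge w i} (hq : ValidPath w q)
    (hr : ValidPath w r) {i : Fin d} (h : r (i + 1) = q (i + 1)) : (r i).2 = (q i).2 := by
  rw [hq, hr, h]

theorem ValidPath.eq_of_update (hd : 1 < d) {q : ∀ i, Edge w i} (hq : ValidPath w q) {i : Fin d}
    {e : Edge w i} (he : ValidPath w (update q i e)) : e = q i := by
  have h1 := hq.fst_eq_of_eq_pred he (update_of_ne (Fin.sub_one_ne_self hd i) e q)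
  have h2 := hq.snd_eq_of_eq_succ he (update_of_ne (Fin.add_one_ne_self hd i) e q)
  rw [update_self] at h1 h2
  exact Prod.ext h1 h2

theorem not_validPath_update_update (hd : 2 < d) {q : ∀ i, Edge w i} (hq : ValidPath w q)
    {i j : Fin d} (hji : j ≠ i) {e : Edge w i} (h1 : e.1 ≠ (q i).1) (h2 : e.2 ≠ (q i).2)
    (g : Edge w j) : ¬ ValidPath w (update (update q i e) j g) := by
  intro hr
  have hri : update (update q i e) j g i = e := by rw [update_of_ne hji.symm, update_self]
  have hr_eq {k : Fin d} (hkj : k ≠ j) (hki : k ≠ i) : update (update q i e) j g k = q k := by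
    rw [update_of_ne hkj, update_of_ne hki]
  by_cases hj : j = i + 1
  · apply h1
    rw [← hri]
    refine hq.fst_eq_of_eq_pred hr (hr_eq ?_ (Fin.sub_one_ne_self (by omega) i))
    exact hj ▸ (Fin.add_one_ne_sub_one hd i).symm
  · apply h2
    rw [← hri]
    exact hq.snd_eq_of_eq_succ hr (hr_eq (Ne.symm hj) (Fin.add_one_ne_self (by omega) i))

theorem aact_update_apply (hd : 2 < d) {f : (∀ i, Edge w i) → ℂ}
    (hf : ∀ p, f p ≠ 0 → ValidPath w p) {q : ∀ i, Edge w i} (hq : ValidPath w q)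
    (x y : NoShare w) (hqx : q x.1 = x.2.1.1) :
    Aact w y.1 y.2.1.1 y.2.1.2 f (update q x.1 x.2.1.2) = if x = y then f q else 0 := by
  by_cases hxy : x = y
  · subst hxy
    simp [Aact, ← hqx]
  rw [if_neg hxy]
  obtain ⟨i, ⟨e, e'⟩, he₁, he₂⟩ := x
  obtain ⟨j, ⟨g, g'⟩, hg⟩ := y
  dsimp only at hqx ⊢
  subst hqx
  simp only [Aact, ite_eq_right_iff]
  intro hg'
  by_contra hne
  have hr := hf _ hne
  obtain rfl : j = i := by
    by_contra hji
    exact not_validPath_update_update hd hq hji (Ne.symm he₁) (Ne.symm he₂) g hr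
  rw [update_idem] at hr
  obtain rfl := hq.eq_of_update (by omega) hr
  rw [update_self] at hg'
  subst hg'
  exact hxy rfl

section AlternatingPath

def alternatingVertex (hw : ∀ i, 2 ≤ w i) (i : Fin d) (e : Edge w i) : ∀ j, Fin (w j) :=
  update (update (fun j => ⟨(e.2.val + (j - i).val + 1) % 2, by have := hw j; omega⟩)
    (i + 1) e.2) i e.1

def alternatingPath (hw : ∀ i, 2 ≤ w i) (i : Fin d) (e : Edge w i) : ∀ j, Edge w j :=
  fun j => (alternatingVertex hw i e j, alternatingVertex hw i e (j + 1))

variable (hw : ∀ i, 2 ≤ w i) (i : Fin d) (e : Edge w i)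

theorem validPath_alternatingPath : ValidPath w (alternatingPath hw i e) := fun _ => rfl

theorem alternatingVertex_self : alternatingVertex hw i e i = e.1 := update_self ..

theorem alternatingVertex_add_one (hd : 1 < d) : alternatingVertex hw i e (i + 1) = e.2 := by
  rw [alternatingVertex, update_of_ne (Fin.add_one_ne_self hd i), update_self]

theorem alternatingPath_self (hd : 1 < d) : alternatingPath hw i e i = e :=
  Prod.ext (alternatingVertex_self hw i e) (alternatingVertex_add_one hw i e hd)

theorem alternatingVertex_val_mod_two (hd : 1 < d) {j : Fin d} (hj : j ≠ i) :
    (alternatingVertex hw i e j).val % 2 = (e.2.val + (j - i).val + 1) % 2 := by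
  by_cases hj' : j = i + 1
  · subst hj'
    rw [alternatingVertex_add_one hw i e hd, add_sub_cancel_left, Fin.val_one',
      Nat.mod_eq_of_lt hd]
    omega
  · rw [alternatingVertex, update_of_ne hj, update_of_ne hj', Nat.mod_mod]

theorem parityPres_alternatingPath_iff (hd : 1 < d) (hodd : Odd d) (j : Fin d) :
    ParityPres (alternatingPath hw i e j) ↔ j = if ParityPres e then i else i - 1 := by
  have hodd' := Nat.odd_iff.mp hodd
  unfold ParityPres alternatingPath
  dsimp only
  by_cases hji : j = i
  · subst hji
    rw [alternatingVertex_self, alternatingVertex_add_one hw j e hd]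
    split_ifs with he
    · simpa using he
    · simpa [Ne.symm (Fin.sub_one_ne_self hd j)] using he
  by_cases hj1 : j + 1 = i
  · obtain rfl := eq_sub_of_add_eq hj1
    have hk := Fin.val_sub_add_one_of_add_one_eq hd hj1
    rw [hj1, alternatingVertex_self, alternatingVertex_val_mod_two hw i e hd hji]
    split_ifs <;> simp only [hji, iff_false, iff_true] <;> omega
  · rw [alternatingVertex_val_mod_two hw i e hd hji, alternatingVertex_val_mod_two hw i e hd hj1,
      Fin.val_add_one_sub_of_add_one_ne hd hj1]
    have hji' : j ≠ i - 1 := fun h => hj1 (by rw [h, sub_add_cancel])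
    split_ifs <;> simp [hji, hji'] <;> omega

theorem ppCount_alternatingPath (hd : 1 < d) (hodd : Odd d) :
    ppCount w (alternatingPath hw i e) = 1 :=
  Finset.card_eq_one.mpr ⟨if ParityPres e then i else i - 1, Finset.ext fun j => by
    simp [parityPres_alternatingPath_iff hw i e hd hodd]⟩

end AlternatingPath

theorem validPath_of_fcom_ne_zero {p : ∀ i, Edge w i} (h : fcom w p ≠ 0) : ValidPath w p := by
  by_contra hp
  exact h (if_neg hp)

theorem validPath_of_f0_ne_zero {p : ∀ i, Edge w i} (h : f0 w p ≠ 0) : ValidPath w p := by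
  by_contra hp
  exact h (if_neg fun h' => hp h'.1)

def noShareEquiv (w : Fin d → ℕ) : NoShare w ≃ Σ i : Fin d,
    {a : Fin (w i) × Fin (w i) // a.1 ≠ a.2} ×
      {b : Fin (w (i + 1)) × Fin (w (i + 1)) // b.1 ≠ b.2} :=
  Equiv.sigmaCongrRight fun i =>
    (Equiv.subtypeEquiv (p := fun ee : Edge w i × Edge w i => ee.1.1 ≠ ee.2.1 ∧ ee.1.2 ≠ ee.2.2)
      (Equiv.prodProdProdComm _ _ _ _) fun _ => Iff.rfl).trans Equiv.subtypeProdEquivProd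

instance (w : Fin d → ℕ) : Fintype (NoShare w) := Fintype.ofEquiv _ (noShareEquiv w).symm

theorem card_noShare (w : Fin d → ℕ) :
    Fintype.card (NoShare w) = ∑ i, w i * w (i + 1) * (w i - 1) * (w (i + 1) - 1) := by
  rw [Fintype.card_congr (noShareEquiv w), Fintype.card_sigma]
  refine Finset.sum_congr rfl fun i _ => ?_
  rw [Fintype.card_prod, Fintype.card_subtype_fst_ne_snd, Fintype.card_subtype_fst_ne_snd,
    Fintype.card_fin, Fintype.card_fin]
  ring

end ABP

/-- Let `f` be `f_com` or `f_0`. The tensors `A^{(i)}_{e,e'} f`,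
over all layers `i` and pairs of edges `e, e'` of layer `i` sharing no vertex, are
linearly independent; consequently the dimension of their span equals
`Σᵢ w i · w (i+1) · (w i − 1) · (w (i+1) − 1)`. -/
theorem g2_span_dim (d : ℕ) [NeZero d] (hd3 : 3 ≤ d) (hodd : Odd d)
    (w : Fin d → ℕ) (hw : ∀ i, 2 ≤ w i)
    (f : (∀ i : Fin d, ABP.Edge w i) → ℂ) (hf : f = ABP.fcom w ∨ f = ABP.f0 w) :
    LinearIndependent ℂ
      (fun x : ABP.NoShare w => ABP.Aact w x.1 x.2.val.1 x.2.val.2 f) ∧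
    Module.finrank ℂ (Submodule.span ℂ
        (Set.range fun x : ABP.NoShare w => ABP.Aact w x.1 x.2.val.1 x.2.val.2 f)) =
      ∑ i : Fin d, w i * w (i + 1) * (w i - 1) * (w (i + 1) - 1) := by
  obtain ⟨hsupp, hone⟩ : (∀ p, f p ≠ 0 → ABP.ValidPath w p) ∧
      ∀ q, ABP.ValidPath w q → ABP.ppCount w q = 1 → f q = 1 := by
    rcases hf with rfl | rfl
    · exact ⟨fun _ => ABP.validPath_of_fcom_ne_zero, fun _ hq _ => if_pos hq⟩
    · exact ⟨fun _ => ABP.validPath_of_f0_ne_zero, fun _ hq hc => if_pos ⟨hq, hc⟩⟩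
  let p (x : ABP.NoShare w) := update (ABP.alternatingPath hw x.1 x.2.1.1) x.1 x.2.1.2
  have li : LinearIndependent ℂ fun x : ABP.NoShare w => ABP.Aact w x.1 x.2.val.1 x.2.val.2 f := by
    refine linearIndependent_of_apply_eq_ite _ p fun x y => ?_
    have hq := ABP.validPath_alternatingPath hw x.1 x.2.1.1
    rw [ABP.aact_update_apply (by omega) hsupp hq x y (ABP.alternatingPath_self hw _ _ (by omega)),
      hone _ hq (ABP.ppCount_alternatingPath hw _ _ (by omega) hodd)]
  exact ⟨li, by rw [finrank_span_eq_card li, ABP.card_noShare]⟩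
end
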